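/- For nonempty finite sets A⁰, Aᵏ, A*, the following deterministic bound holds: |F(A⁰; Aᵏ) − F(A⁰; A*)| ≤ 3·|A* ∆ Aᵏ|/|A*|, where F(A; B) = 2|A ∩ B|/(|A| + |B|) and ∆ denotes symmetric difference. -/

import Mathlib

/-!
Write `F(A; B)` as `dice A B`. Since `dice A B * (#A + #B) = 2 #(A ∩ B)`, clearing denominators gives
`F(A; B) - F(A; C) = (2 (#(A ∩ B) - #(A ∩ C)) + F(A; B) (#C - #B)) / (#A + #C)`.
Both differences of cardinalities are bounded by `#(B ∆ C)` and `0 ≤ F(A; B) ≤ 1`, so the numerator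
is at most `3 #(B ∆ C)` in absolute value, while the denominator is at least `#C`.
-/

open Finset
open scoped symmDiff

section

variable {α : Type*} [DecidableEq α]

namespace Finset

lemma card_symmDiff (s t : Finset α) : #(s ∆ t) = #(s \ t) + #(t \ s) := by
  rw [symmDiff_def, sup_eq_union, card_union_of_disjoint disjoint_sdiff_sdiff]

lemma abs_card_sub_card_le_card_symmDiff (s t : Finset α) : |(#s : ℝ) - #t| ≤ #(s ∆ t) := by
  have hs : (#(s \ t) : ℝ) + #(s ∩ t) = #s := by exact_mod_cast card_sdiff_add_card_inter s t
  have ht : (#(t \ s) : ℝ) + #(s ∩ t) = #t := by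
    rw [inter_comm]; exact_mod_cast card_sdiff_add_card_inter t s
  rw [card_symmDiff, Nat.cast_add, abs_le]
  constructor <;> linarith [(#(s \ t)).cast_nonneg (α := ℝ), (#(t \ s)).cast_nonneg (α := ℝ)]

lemma abs_card_inter_sub_card_inter_le (A B C : Finset α) :
    |(#(A ∩ B) : ℝ) - #(A ∩ C)| ≤ #(B ∆ C) := by
  refine (abs_card_sub_card_le_card_symmDiff _ _).trans ?_
  rw [← inf_eq_inter, ← inf_eq_inter, ← inf_symmDiff_distrib_left]
  exact_mod_cast card_le_card inter_subset_right

lemma two_mul_card_inter_le_card_add_card (A B : Finset α) : 2 * #(A ∩ B) ≤ #A + #B := by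
  have hA := card_le_card (inter_subset_left (s₁ := A) (s₂ := B))
  have hB := card_le_card (inter_subset_right (s₁ := A) (s₂ := B))
  omega

end Finset

noncomputable def dice (A B : Finset α) : ℝ := 2 * #(A ∩ B) / (#A + #B)

lemma dice_nonneg (A B : Finset α) : 0 ≤ dice A B := by
  unfold dice; positivity

lemma dice_le_one (A B : Finset α) : dice A B ≤ 1 :=
  div_le_one_of_le₀ (by exact_mod_cast two_mul_card_inter_le_card_add_card A B) (by positivity)

-- Also true when `#A + #B = 0`: then `A ∩ B = ∅` and both sides vanish.
lemma dice_mul_card_add_card (A B : Finset α) : dice A B * (#A + #B) = 2 * #(A ∩ B) := by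
  rcases eq_or_ne ((#A : ℝ) + #B) 0 with h | h
  · have := two_mul_card_inter_le_card_add_card A B
    have : #A + #B = 0 := by exact_mod_cast h
    simp only [h, mul_zero]
    norm_cast
    omega
  · exact div_mul_cancel₀ _ h

lemma dice_sub_dice (A B C : Finset α) (hAC : (#A : ℝ) + #C ≠ 0) :
    dice A B - dice A C =
      (2 * ((#(A ∩ B) : ℝ) - #(A ∩ C)) + dice A B * (#C - #B)) / (#A + #C) := by
  rw [eq_div_iff hAC]
  linear_combination dice_mul_card_add_card A B - dice_mul_card_add_card A C

theorem abs_dice_sub_dice_le (A B C : Finset α) (hC : C.Nonempty) :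
    |dice A B - dice A C| ≤ 3 * #(C ∆ B) / #C := by
  have hCpos : (0 : ℝ) < #C := by exact_mod_cast hC.card_pos
  have hinter := abs_card_inter_sub_card_inter_le A B C
  rw [symmDiff_comm] at hinter
  have hnum : |2 * ((#(A ∩ B) : ℝ) - #(A ∩ C)) + dice A B * (#C - #B)| ≤ 3 * #(C ∆ B) :=
    calc _ ≤ 2 * |(#(A ∩ B) : ℝ) - #(A ∩ C)| + dice A B * |(#C : ℝ) - #B| := by
          grw [abs_add_le, abs_mul, abs_mul, abs_two, abs_of_nonneg (dice_nonneg A B)]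
      _ ≤ 2 * #(C ∆ B) + 1 * #(C ∆ B) := by
          gcongr
          · exact dice_le_one A B
          · exact abs_card_sub_card_le_card_symmDiff C B
      _ = 3 * #(C ∆ B) := by ring
  rw [dice_sub_dice A B C (by linarith), abs_div, abs_of_pos (a := (#A : ℝ) + #C) (by linarith)]
  calc _ ≤ 3 * (#(C ∆ B) : ℝ) / (#A + #C) := by gcongr
    _ ≤ 3 * #(C ∆ B) / #C := by gcongr; exact le_add_of_nonneg_left (by positivity)

end

theorem F_diff_bound_general {α : Type*} [DecidableEq α] (A0 Ak As : Finset α)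
    (hs : As.Nonempty) :
    |2 * ((A0 ∩ Ak).card : ℝ) / ((A0.card : ℝ) + (Ak.card : ℝ)) -
      2 * ((A0 ∩ As).card : ℝ) / ((A0.card : ℝ) + (As.card : ℝ))| ≤
      3 * ((As ∆ Ak).card : ℝ) / (As.card : ℝ) :=
  abs_dice_sub_dice_le A0 Ak As hs

theorem F_diff_bound {α : Type*} [DecidableEq α] (A0 Ak As : Finset α)
    (h0 : A0.Nonempty) (hk : Ak.Nonempty) (hs : As.Nonempty) :
    |2 * ((A0 ∩ Ak).card : ℝ) / ((A0.card : ℝ) + (Ak.card : ℝ)) -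
      2 * ((A0 ∩ As).card : ℝ) / ((A0.card : ℝ) + (As.card : ℝ))| ≤
      3 * ((As ∆ Ak).card : ℝ) / (As.card : ℝ) :=
  F_diff_bound_general A0 Ak As hs
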